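/- Suppose f ∈ C²([t0,t1)) (with t1 > t0) solves the ODE with the given initial data. Then for every t ∈ (t0,t1) one has (1+f(t))^c̄ < (1+f̊)^c̄·(1 − 𝙴·t0^ā + 𝙴·t^ā). -/

import Mathlib

/-!
Multiplying the equation by `t^a (1+f)^(-c)` turns it into
`(t^a (1+f)^(-c) f')' = b t^(a-2) (1+f)^(1-c) f`. A first-zero argument shows `f' > 0`: at the
first zero of `f'` the equation forces `f'' = b f (1+f)/t² > 0`, which is impossible for a
function that is positive just before. Hence `f` increases, the right-hand side is positive and
`A(t) = t^a (1+f)^(-c) f'` increases, so `A(t) > A(t0) = K`. Then the comparison function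
`(1+f)^c̄ - c̄ K/ā · t^ā` has derivative `c̄ t^(-a) (A(t) - K) < 0` and is strictly decreasing;
comparing its values at `t` and `t0` gives the bound, since `c̄ K/ā = (1+f̊)^c̄ 𝙴`.
-/

open Real Set Topology

theorem IsMinOn.hasDerivWithinAt_Icc_right_nonpos {g : ℝ → ℝ} {a b d : ℝ} (hab : a < b)
    (hmin : IsMinOn g (Icc a b) b) (hd : HasDerivWithinAt g d (Icc a b) b) : d ≤ 0 := by
  have hcone : a - b ∈ posTangentConeAt (Icc a b) b :=
    sub_mem_posTangentConeAt_of_segment_subset (by rw [segment_symm, segment_eq_Icc hab.le])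
  have h := hmin.localize.hasFDerivWithinAt_nonneg hd hcone
  rw [ContinuousLinearMap.toSpanSingleton_apply, smul_eq_mul] at h
  exact nonpos_of_mul_nonneg_right h (sub_neg.2 hab)

theorem pos_of_deriv_pos_at_first_zero {g : ℝ → ℝ} {a b : ℝ} (hg : ContinuousOn g (Ico a b))
    (ha : 0 < g a)
    (hzero : ∀ x ∈ Ioo a b, (∀ y ∈ Ico a x, 0 < g y) → g x = 0 → 0 < deriv g x) :
    ∀ x ∈ Ico a b, 0 < g x := by
  by_contra! ⟨u, hu, hgu⟩
  have hgu' : ContinuousOn g (Icc a u) := hg.mono (Icc_subset_Ico_right hu.2)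
  set Z := Icc a u ∩ g ⁻¹' Iic 0
  have hZ : IsClosed Z := hgu'.preimage_isClosed_of_isClosed isClosed_Icc isClosed_Iic
  have hZbdd : BddBelow Z := ⟨a, fun x hx => hx.1.1⟩
  have hτ : sInf Z ∈ Z := hZ.csInf_mem ⟨u, ⟨hu.1, le_rfl⟩, hgu⟩ hZbdd
  set τ := sInf Z
  have hbefore : ∀ y ∈ Ico a τ, 0 < g y := fun y hy => by
    by_contra! h
    exact hy.2.not_ge (csInf_le hZbdd ⟨⟨hy.1, hy.2.le.trans hτ.1.2⟩, h⟩)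
  have haτ : a < τ := hτ.1.1.lt_of_ne fun h => (h ▸ hτ.2 : g a ≤ 0).not_gt ha
  have hIcc : Icc a τ ⊆ Icc a u := Icc_subset_Icc_right hτ.1.2
  have hgτ : g τ = 0 := by
    obtain ⟨σ, hσ, hgσ⟩ := intermediate_value_Icc' haτ.le (hgu'.mono hIcc) ⟨hτ.2, ha.le⟩
    have : τ ≤ σ := csInf_le hZbdd ⟨hIcc hσ, hgσ.le⟩
    rwa [le_antisymm hσ.2 this] at hgσ
  have hmin : IsMinOn g (Icc a τ) τ := fun y hy => by
    rcases hy.2.lt_or_eq with h | h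
    · simpa [hgτ] using (hbefore y ⟨hy.1, h⟩).le
    · simp [h]
  have hd := hzero τ ⟨haτ, hτ.1.2.trans_lt hu.2⟩ hbefore hgτ
  exact hd.not_ge (hmin.hasDerivWithinAt_Icc_right_nonpos haτ
    (differentiableAt_of_deriv_ne_zero hd.ne').hasDerivAt.hasDerivWithinAt)

theorem ContDiffOn.continuousOn_deriv_Ico {f : ℝ → ℝ} {a b : ℝ} {n : WithTop ℕ∞}
    (hf : ContDiffOn ℝ n f (Ico a b)) (hn : 1 ≤ n) (ha : DifferentiableAt ℝ f a) :
    ContinuousOn (deriv f) (Ico a b) := by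
  refine (hf.continuousOn_derivWithin (uniqueDiffOn_Ico a b) hn).congr fun x hx => ?_
  rcases hx.1.eq_or_lt with rfl | hax
  · exact (ha.derivWithin (uniqueDiffOn_Ico _ b _ hx)).symm
  · exact (derivWithin_of_mem_nhds (Ico_mem_nhds hax hx.2)).symm

theorem ContDiffOn.hasDerivAt_deriv {f : ℝ → ℝ} {s : Set ℝ} {x : ℝ} {n : WithTop ℕ∞}
    (hf : ContDiffOn ℝ n f s) (hn : 2 ≤ n) (hx : s ∈ 𝓝 x) :
    HasDerivAt (deriv f) (deriv (deriv f) x) x :=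
  (((hf.mono interior_subset).deriv_of_isOpen isOpen_interior (m := 1) hn).differentiableOn
    one_ne_zero |>.differentiableAt (isOpen_interior.mem_nhds (mem_interior_iff_mem_nhds.2 hx))).hasDerivAt

noncomputable def odeLHS (a b c : ℝ) (f : ℝ → ℝ) (t : ℝ) : ℝ :=
  deriv (deriv f) t + (a / t) * deriv f t - (b / t ^ 2) * f t * (1 + f t)
    - (c / (1 + f t)) * (deriv f t) ^ 2

noncomputable def weightedDeriv (a c : ℝ) (f : ℝ → ℝ) (s : ℝ) : ℝ :=
  s ^ a * (1 + f s) ^ (-c) * deriv f s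

theorem hasDerivAt_weightedDeriv {a b c s : ℝ} {f : ℝ → ℝ} (hs : 0 < s) (hfs : 0 < 1 + f s)
    (hf : HasDerivAt f (deriv f s) s) (hf' : HasDerivAt (deriv f) (deriv (deriv f) s) s)
    (hode : odeLHS a b c f s = 0) :
    HasDerivAt (weightedDeriv a c f)
      (s ^ a * (1 + f s) ^ (-c) * (b / s ^ 2 * f s * (1 + f s))) s := by
  have hpow : HasDerivAt (fun x => x ^ a * (1 + f x) ^ (-c))
      (a * s ^ (a - 1) * (1 + f s) ^ (-c) + s ^ a * (deriv f s * -c * (1 + f s) ^ (-c - 1))) s :=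
    (hasDerivAt_rpow_const (Or.inl hs.ne')).mul ((hf.const_add 1).rpow_const (Or.inl hfs.ne'))
  refine (hpow.mul hf').congr_deriv ?_
  unfold odeLHS at hode
  rw [show deriv (deriv f) s = b / s ^ 2 * f s * (1 + f s) + c / (1 + f s) * deriv f s ^ 2
    - a / s * deriv f s by linear_combination hode, rpow_sub hs, rpow_sub hfs, rpow_one, rpow_one]
  field_simp
  ring

section ODE

variable {a b c t0 t1 : ℝ} {f : ℝ → ℝ}

theorem deriv_pos_of_odeLHS_eq_zero (ht0 : 0 < t0) (hb : 0 < b)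
    (hf : ContinuousOn f (Ico t0 t1)) (hf' : ContinuousOn (deriv f) (Ico t0 t1))
    (hft0 : 0 < f t0) (hft0' : 0 < deriv f t0) (hode : ∀ t ∈ Ioo t0 t1, odeLHS a b c f t = 0) :
    ∀ s ∈ Ico t0 t1, 0 < deriv f s := by
  refine pos_of_deriv_pos_at_first_zero hf' hft0' fun x hx hbefore hx0 => ?_
  have hmono : StrictMonoOn f (Icc t0 x) :=
    strictMonoOn_of_deriv_pos (convex_Icc t0 x) (hf.mono (Icc_subset_Ico_right hx.2))
      fun y hy => hbefore y (Ioo_subset_Ico_self (by rwa [interior_Icc] at hy))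
  have hfx : 0 < f x :=
    hft0.trans (hmono (left_mem_Icc.2 hx.1.le) (right_mem_Icc.2 hx.1.le) hx.1)
  have hx0' : 0 < x := ht0.trans hx.1
  have h := hode x hx
  unfold odeLHS at h
  rw [hx0] at h
  rw [show deriv (deriv f) x = b / x ^ 2 * f x * (1 + f x) by linear_combination h]
  positivity

theorem strictMonoOn_of_odeLHS_eq_zero (ht0 : 0 < t0) (hb : 0 < b)
    (hf : ContinuousOn f (Ico t0 t1)) (hf' : ContinuousOn (deriv f) (Ico t0 t1))
    (hft0 : 0 < f t0) (hft0' : 0 < deriv f t0) (hode : ∀ t ∈ Ioo t0 t1, odeLHS a b c f t = 0) :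
    StrictMonoOn f (Ico t0 t1) :=
  strictMonoOn_of_deriv_pos (convex_Ico t0 t1) hf fun x hx =>
    deriv_pos_of_odeLHS_eq_zero ht0 hb hf hf' hft0 hft0' hode x
      (Ioo_subset_Ico_self (by rwa [interior_Ico] at hx))

theorem strictMonoOn_weightedDeriv (ht0 : 0 < t0) (hb : 0 < b)
    (hreg : ContDiffOn ℝ 2 f (Ico t0 t1)) (hf' : ContinuousOn (deriv f) (Ico t0 t1))
    (hfpos : ∀ s ∈ Ico t0 t1, 0 < f s) (hode : ∀ t ∈ Ioo t0 t1, odeLHS a b c f t = 0) :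
    StrictMonoOn (weightedDeriv a c f) (Ico t0 t1) := by
  have hf1 : ∀ s ∈ Ico t0 t1, 0 < 1 + f s := fun s hs => by linarith [hfpos s hs]
  refine strictMonoOn_of_deriv_pos (convex_Ico t0 t1) ?_ fun x hx => ?_
  · refine ((continuousOn_id.rpow_const fun x hx => ?_).mul
      ((hreg.continuousOn.const_add 1).rpow_const fun x hx => ?_)).mul hf'
    · exact Or.inl (ht0.trans_le hx.1).ne'
    · exact Or.inl (hf1 x hx).ne'
  rw [interior_Ico] at hx
  have hx0 : 0 < x := ht0.trans hx.1
  have hnhds : Ico t0 t1 ∈ 𝓝 x := Ico_mem_nhds hx.1 hx.2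
  rw [(hasDerivAt_weightedDeriv hx0 (hf1 x (Ioo_subset_Ico_self hx))
    ((hreg.contDiffAt hnhds).differentiableAt two_ne_zero).hasDerivAt
    (hreg.hasDerivAt_deriv le_rfl hnhds) (hode x hx)).deriv]
  have := hfpos x (Ioo_subset_Ico_self hx)
  positivity

theorem strictAntiOn_comparison_of_lt_weightedDeriv (ht0 : 0 < t0) (ha : a ≠ 1) (hc : 1 < c)
    (hreg : ContDiffOn ℝ 2 f (Ico t0 t1)) (hf1 : ∀ s ∈ Ico t0 t1, 0 < 1 + f s) {K : ℝ}
    (hK : ∀ s ∈ Ioo t0 t1, K < weightedDeriv a c f s) :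
    StrictAntiOn (fun s => (1 + f s) ^ (1 - c) - (1 - c) * K / (1 - a) * s ^ (1 - a))
      (Ico t0 t1) := by
  refine strictAntiOn_of_deriv_neg (convex_Ico t0 t1) ?_ fun x hx => ?_
  · refine ((hreg.continuousOn.const_add 1).rpow_const fun x hx => ?_).sub
      (continuousOn_const.mul (continuousOn_id.rpow_const fun x hx => ?_))
    · exact Or.inl (hf1 x hx).ne'
    · exact Or.inl (ht0.trans_le hx.1).ne'
  rw [interior_Ico] at hx
  have hx0 : 0 < x := ht0.trans hx.1
  have hfx := hf1 x (Ioo_subset_Ico_self hx)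
  have hd : HasDerivAt (fun s => (1 + f s) ^ (1 - c) - (1 - c) * K / (1 - a) * s ^ (1 - a))
      ((1 - c) * x ^ (-a) * (weightedDeriv a c f x - K)) x := by
    refine (((((hreg.contDiffAt (Ico_mem_nhds hx.1 hx.2)).differentiableAt
      two_ne_zero).hasDerivAt.const_add 1).rpow_const (p := 1 - c) (Or.inl hfx.ne')).sub
      ((hasDerivAt_rpow_const (p := 1 - a) (Or.inl hx0.ne')).const_mul _)).congr_deriv ?_
    have hxa : x ^ (-a) * x ^ a = 1 := by rw [← rpow_add hx0, neg_add_cancel, rpow_zero]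
    have ha' : 1 - a ≠ 0 := sub_ne_zero.2 (Ne.symm ha)
    rw [sub_sub_cancel_left, sub_sub_cancel_left, weightedDeriv,
      show (1 - c) * K / (1 - a) * ((1 - a) * x ^ (-a)) = (1 - c) * K * x ^ (-a) by field_simp]
    linear_combination -(1 - c) * (1 + f x) ^ (-c) * deriv f x * hxa
  rw [hd.deriv]
  exact mul_neg_of_neg_of_pos (mul_neg_of_neg_of_pos (by linarith) (rpow_pos_of_pos hx0 _))
    (sub_pos.2 (hK x hx))

end ODE

theorem stmt_5_general
    (t0 t1 a b c fi fi0 abar cbar EE : ℝ) (f : ℝ → ℝ)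
    (ht0 : 0 < t0) (ht01 : t0 < t1)
    (ha : 1 < a) (hb : 0 < b) (hc : 1 < c)
    (hfi : 0 < fi) (hfi0 : 0 < fi0)
    (habar : abar = 1 - a) (hcbar : cbar = 1 - c)
    (hEE : EE = cbar * fi0 * t0 ^ (1 - abar) / (abar * (1 + fi)))
    (hreg : ContDiffOn ℝ 2 f (Set.Ico t0 t1))
    (hode : ∀ t ∈ Set.Ico t0 t1,
      deriv (deriv f) t + (a / t) * deriv f t
        - (b / t ^ 2) * f t * (1 + f t)
        - (c / (1 + f t)) * (deriv f t) ^ 2 = 0)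
    (hft0 : f t0 = fi) (hft0' : deriv f t0 = fi0) :
    ∀ t ∈ Set.Ioo t0 t1,
      (1 + f t) ^ cbar < (1 + fi) ^ cbar * (1 - EE * t0 ^ abar + EE * t ^ abar) := by
  intro t ht
  have ht0mem : t0 ∈ Ico t0 t1 := left_mem_Ico.2 ht01
  have hode' : ∀ s ∈ Ioo t0 t1, odeLHS a b c f s = 0 := fun s hs => hode s (Ioo_subset_Ico_self hs)
  -- `f` is only assumed `C²` on `[t0, t1)`; differentiability at `t0` comes from `f'(t0) ≠ 0`,
  -- since `deriv` is `0` at points of non-differentiability.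
  have hf' := hreg.continuousOn_deriv_Ico one_le_two
    (differentiableAt_of_deriv_ne_zero (hft0' ▸ hfi0.ne'))
  have hmono := strictMonoOn_of_odeLHS_eq_zero ht0 hb hreg.continuousOn hf' (hft0 ▸ hfi)
    (hft0' ▸ hfi0) hode'
  have hfpos : ∀ s ∈ Ico t0 t1, 0 < f s := fun s hs =>
    (hft0 ▸ hfi).trans_le (hmono.monotoneOn ht0mem hs hs.1)
  have hA := strictMonoOn_weightedDeriv ht0 hb hreg hf' hfpos hode'
  have hG := strictAntiOn_comparison_of_lt_weightedDeriv ht0 ha.ne' hc hreg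
    (fun s hs => by linarith [hfpos s hs]) (fun s hs => hA ht0mem (Ioo_subset_Ico_self hs) hs.1)
    ht0mem (Ioo_subset_Ico_self ht) ht.1
  simp only [weightedDeriv, hft0, hft0'] at hG
  subst habar hcbar hEE
  have h1fi : 0 < 1 + fi := by linarith
  have hK : (1 - c) * (t0 ^ a * (1 + fi) ^ (-c) * fi0) / (1 - a)
      = (1 + fi) ^ (1 - c) * ((1 - c) * fi0 * t0 ^ (1 - (1 - a)) / ((1 - a) * (1 + fi))) := by
    rw [sub_sub_cancel, rpow_sub h1fi, rpow_one, rpow_neg h1fi.le]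
    field_simp
  rw [hK] at hG
  linarith

/-- If `f ∈ C²([t0,t1))` solves the ODE with the given initial data, then
for every `t ∈ (t0,t1)` one has `(1+f(t))^c̄ < (1+f̊)^c̄ (1 − 𝙴 t0^ā + 𝙴 t^ā)`, where
`ā = 1−a`, `c̄ = 1−c` and `𝙴 = c̄ f̊0 t0^(1−ā)/(ā(1+f̊))`. -/
theorem stmt_5
    (t0 t1 a b c fi fi0 abar cbar EE : ℝ) (f : ℝ → ℝ)
    (ht0 : 0 < t0) (ht01 : t0 < t1)
    (ha : 1 < a) (hb : 0 < b) (hc : 1 < c) (hc' : c < 3 / 2)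
    (hfi : 0 < fi) (hfi0 : 0 < fi0)
    (habar : abar = 1 - a) (hcbar : cbar = 1 - c)
    (hEE : EE = cbar * fi0 * t0 ^ (1 - abar) / (abar * (1 + fi)))
    (hreg : ContDiffOn ℝ 2 f (Set.Ico t0 t1))
    (hode : ∀ t ∈ Set.Ico t0 t1,
      deriv (deriv f) t + (a / t) * deriv f t
        - (b / t ^ 2) * f t * (1 + f t)
        - (c / (1 + f t)) * (deriv f t) ^ 2 = 0)
    (hft0 : f t0 = fi) (hft0' : deriv f t0 = fi0) :
    ∀ t ∈ Set.Ioo t0 t1,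
      (1 + f t) ^ cbar < (1 + fi) ^ cbar * (1 - EE * t0 ^ abar + EE * t ^ abar) :=
  stmt_5_general t0 t1 a b c fi fi0 abar cbar EE f ht0 ht01 ha hb hc hfi hfi0 habar hcbar hEE hreg
    hode hft0 hft0'
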